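/- If type(R) = dim_k ((x₁R :_R m_R)/x₁R) = 1 (e.g. if R is Gorenstein), then C_R + x₁R = (x₁R :_R m_R). -/

import Mathlib

/-!
Every `f ∈ m_R` has order at least `ord x₁`, so `x₁ ∣ f` in `k⟦t⟧`; hence for `c` in the conductor
`c f = x₁ (c f / x₁)` with `c f / x₁ ∈ R`, i.e. `C_R ⊆ (x₁R :_R m_R)`. The conductor is not contained
in `x₁R`: otherwise `c = x₁ r` forces `r ∈ C_R`, and iterating shows that `x₁ⁿ` divides `tᴺ ∈ C_R`
for every `n`. So the image of `C_R` in the one-dimensional `k`-space `(x₁R :_R m_R)/x₁R` is nonzero,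
hence fills it.
-/

open PowerSeries
set_option synthInstance.maxHeartbeats 1000000
set_option maxHeartbeats 1000000

noncomputable section

def mxl {k : Type*} [Field k] (R : Subalgebra k (PowerSeries k)) : Ideal R :=
  RingHom.ker (((constantCoeff : PowerSeries k →+* k)).comp R.val.toRingHom)

def condIdeal {k : Type*} [Field k] (R : Subalgebra k (PowerSeries k)) : Ideal R where
  carrier := {r : R | ∀ g : PowerSeries k, (r : PowerSeries k) * g ∈ R}
  add_mem' := by
    intro a b ha hb g
    have := R.add_mem (ha g) (hb g)
    simpa [add_mul] using this
  zero_mem' := by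
    intro g
    simpa using R.zero_mem
  smul_mem' := by
    intro c x hx g
    have h : ((c • x : R) : PowerSeries k) * g
        = (c : PowerSeries k) * ((x : PowerSeries k) * g) := by
      rw [smul_eq_mul, MulMemClass.coe_mul]
      ring
    rw [h]
    exact R.mul_mem c.2 (hx g)

/-- The reduced type `s(R) = dim_k (C_R + x₁R)/(x₁R)`, computed as the dimension of the
image of the conductor in `R/(x₁)`. -/
def redType {k : Type*} [Field k] (R : Subalgebra k (PowerSeries k)) (x1 : R) : ℕ :=
  Module.finrank k (Submodule.restrictScalars k
    (Ideal.map (Ideal.Quotient.mk (Ideal.span {x1})) (condIdeal R)))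

/-- The Cohen–Macaulay type `dim_k (x₁R :_R m_R)/(x₁R)`, computed as the dimension of the
image of `(x₁R :_R m_R)` in `R/(x₁)`. -/
def cmType {k : Type*} [Field k] (R : Subalgebra k (PowerSeries k)) (x1 : R) : ℕ :=
  Module.finrank k (Submodule.restrictScalars k
    (Ideal.map (Ideal.Quotient.mk (Ideal.span {x1}))
      (Submodule.colon (Ideal.span {x1}) (mxl R))))

theorem PowerSeries.dvd_of_order_le {k : Type*} [Field k] {f g : PowerSeries k} (hf : f ≠ 0)
    (h : f.order ≤ g.order) : f ∣ g := by
  obtain rfl | hg := eq_or_ne g 0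
  · exact dvd_zero f
  have hfX : f ∣ X ^ f.order.toNat := by
    conv_lhs => rw [← X_pow_order_mul_divXPowOrder (f := f)]
    exact (isUnit_divided_by_X_pow_order hf).mul_right_dvd.2 dvd_rfl
  have hord : f.order.toNat ≤ g.order.toNat :=
    ENat.toNat_le_toNat h (order_finite_iff_ne_zero.2 hg).ne
  exact hfX.trans <| (pow_dvd_pow X hord).trans X_pow_order_dvd

theorem Ideal.sup_eq_of_finrank_map_eq_one {k A : Type*} [Field k] [CommRing A] [Algebra k A]
    {I J S : Ideal A} (hIS : I ≤ S) (hJS : J ≤ S) (hIJ : ¬ I ≤ J)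
    (hS : Module.finrank k ((S.map (Quotient.mk J)).restrictScalars k) = 1) : I ⊔ J = S := by
  set Q := Quotient.mk J
  have hle : (I.map Q).restrictScalars k ≤ (S.map Q).restrictScalars k := map_mono hIS
  have : FiniteDimensional k ((S.map Q).restrictScalars k) := .of_finrank_pos (by omega)
  have : FiniteDimensional k ((I.map Q).restrictScalars k) := Submodule.finiteDimensional_of_le hle
  have hI0 : (I.map Q).restrictScalars k ≠ ⊥ := by
    rwa [Ne, Submodule.restrictScalars_eq_bot_iff, map_eq_bot_iff_le_ker, mk_ker]
  have hmap : I.map Q = S.map Q := Submodule.restrictScalars_injective k _ _ <|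
    Submodule.eq_of_le_of_finrank_le hle (hS ▸ Submodule.one_le_finrank_iff.2 hI0)
  have hcomap (K : Ideal A) : (K.map Q).comap Q = K ⊔ J := by
    rw [comap_map_of_surjective Q Quotient.mk_surjective, ← RingHom.ker_eq_comap_bot, mk_ker]
  rw [← hcomap, hmap, hcomap, sup_eq_left.2 hJS]

section Conductor

variable {k : Type*} [Field k] {R : Subalgebra k (PowerSeries k)}

theorem mem_mxl_iff {r : R} : r ∈ mxl R ↔ constantCoeff (r : PowerSeries k) = 0 :=
  RingHom.mem_ker

theorem condIdeal_le_colon_of_forall_dvd {x : R} (hx : ∀ m ∈ mxl R, (x : PowerSeries k) ∣ m) :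
    condIdeal R ≤ Submodule.colon (Ideal.span {x}) (mxl R) := by
  intro c hc
  refine Submodule.mem_colon.2 fun m hm => ?_
  obtain ⟨g, hg⟩ := hx m hm
  refine Ideal.mem_span_singleton'.2 ⟨⟨c * g, hc g⟩, Subtype.ext ?_⟩
  simp only [MulMemClass.coe_mul, smul_eq_mul, hg]
  ring

theorem mul_mem_condIdeal {c : R} (hc : c ∈ condIdeal R) (g : PowerSeries k) :
    ∃ hcg : (c : PowerSeries k) * g ∈ R, (⟨_, hcg⟩ : R) ∈ condIdeal R :=
  ⟨hc g, fun h => by simpa only [mul_assoc] using hc (g * h)⟩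

theorem exists_mem_condIdeal_eq_mul {x : R} (hx : (x : PowerSeries k) ≠ 0)
    (hC : condIdeal R ≤ Ideal.span {x}) {c : R} (hc : c ∈ condIdeal R) :
    ∃ r ∈ condIdeal R, c = x * r := by
  obtain ⟨r, rfl⟩ := Ideal.mem_span_singleton.1 (hC hc)
  refine ⟨r, fun g => ?_, rfl⟩
  obtain ⟨hcg, hcgC⟩ := mul_mem_condIdeal hc g
  obtain ⟨s, hs⟩ := Ideal.mem_span_singleton.1 (hC hcgC)
  have hrs : (x : PowerSeries k) * (r * g) = x * s := by
    simpa only [MulMemClass.coe_mul, mul_assoc] using congrArg Subtype.val hs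
  exact mul_left_cancel₀ hx hrs ▸ s.2

theorem exists_mem_condIdeal_eq_pow_mul {x : R} (hx : (x : PowerSeries k) ≠ 0)
    (hC : condIdeal R ≤ Ideal.span {x}) {c : R} (hc : c ∈ condIdeal R) (n : ℕ) :
    ∃ r ∈ condIdeal R, c = x ^ n * r := by
  induction n with
  | zero => exact ⟨c, hc, (one_mul c).symm⟩
  | succ n ih =>
    obtain ⟨r, hr, rfl⟩ := ih
    obtain ⟨s, hs, rfl⟩ := exists_mem_condIdeal_eq_mul hx hC hr
    exact ⟨s, hs, by ring⟩

theorem not_condIdeal_le_span {x : R} (hx : x ∈ mxl R) (hx0 : (x : PowerSeries k) ≠ 0)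
    {N : ℕ} (hN : ∀ g : PowerSeries k, X ^ N * g ∈ R) : ¬ condIdeal R ≤ Ideal.span {x} := by
  intro hC
  have hXN : (X : PowerSeries k) ^ N ∈ R := by simpa only [mul_one] using hN 1
  obtain ⟨r, -, hr⟩ := exists_mem_condIdeal_eq_pow_mul hx0 hC (c := ⟨_, hXN⟩) hN (N + 1)
  have hXx : (X : PowerSeries k) ∣ x := X_dvd_iff.2 (mem_mxl_iff.1 hx)
  have : (X : PowerSeries k) ^ (N + 1) ∣ X ^ N :=
    (pow_dvd_pow_of_dvd hXx _).trans ⟨r, by simpa using congrArg Subtype.val hr⟩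
  have := (pow_dvd_pow_iff X_ne_zero X_prime.not_isUnit).1 this
  omega

end Conductor

theorem stmt19_general {k : Type*} [Field k]
    (R : Subalgebra k (PowerSeries k))
    (hN : ∃ N : ℕ, 1 ≤ N ∧ ∀ g : PowerSeries k, (X : PowerSeries k) ^ N * g ∈ R)
    (a1 : ℕ) (ha1pos : 0 < a1) (x1 : PowerSeries k) (hx1R : x1 ∈ R)
    (hx1ord : x1.order = a1)
    (ha1min : ∀ f ∈ R, f ≠ 0 → (constantCoeff : PowerSeries k →+* k) f = 0 → (a1 : ℕ∞) ≤ f.order)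
    (hGor : cmType R ⟨x1, hx1R⟩ = 1) :
    condIdeal R ⊔ Ideal.span {(⟨x1, hx1R⟩ : R)}
      = Submodule.colon (Ideal.span {(⟨x1, hx1R⟩ : R)}) (mxl R) := by
  obtain ⟨N, -, hN⟩ := hN
  have hx1 : x1 ≠ 0 := order_finite_iff_ne_zero.1 (hx1ord ▸ ENat.natCast_lt_top a1)
  have hx1m : (⟨x1, hx1R⟩ : R) ∈ mxl R := mem_mxl_iff.2 <| by
    rw [← coeff_zero_eq_constantCoeff_apply]
    exact coeff_of_lt_order 0 (by rw [hx1ord]; exact_mod_cast ha1pos)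
  have hdvd : ∀ m ∈ mxl R, x1 ∣ (m : PowerSeries k) := by
    intro m hm
    obtain hm0 | hm0 := eq_or_ne (m : PowerSeries k) 0
    · exact hm0 ▸ dvd_zero x1
    · exact dvd_of_order_le hx1 (hx1ord ▸ ha1min m m.2 hm0 (mem_mxl_iff.1 hm))
  exact Ideal.sup_eq_of_finrank_map_eq_one (condIdeal_le_colon_of_forall_dvd hdvd)
    Ideal.le_colon (not_condIdeal_le_span hx1m hx1 hN) hGor

theorem stmt19 {k : Type*} [Field k] [IsAlgClosed k] [CharZero k]
    (R : Subalgebra k (PowerSeries k)) (hR : R ≠ ⊤)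
    (hN : ∃ N : ℕ, 1 ≤ N ∧ ∀ g : PowerSeries k, (X : PowerSeries k) ^ N * g ∈ R)
    (a1 : ℕ) (ha1pos : 0 < a1) (x1 : PowerSeries k) (hx1R : x1 ∈ R)
    (hx1ord : x1.order = a1)
    (ha1min : ∀ f ∈ R, f ≠ 0 → (constantCoeff : PowerSeries k →+* k) f = 0 → (a1 : ℕ∞) ≤ f.order)
    (hGor : cmType R ⟨x1, hx1R⟩ = 1) :
    condIdeal R ⊔ Ideal.span {(⟨x1, hx1R⟩ : R)}
      = Submodule.colon (Ideal.span {(⟨x1, hx1R⟩ : R)}) (mxl R) :=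
  stmt19_general R hN a1 ha1pos x1 hx1R hx1ord ha1min hGor

end
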